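/- arXiv:2310.10890 — 3 statements merged into one kernel-verified Lean document; each statement's English description precedes it below -/
import Mathlib

section
/- Let h be a holomorphic function on the disk {|z| ≤ R} (0 < R < 1) satisfying |h(z)| ≤ K·|1 - z²|²/(1 - |z|²)² for all |z| ≤ R. Then |h'(0)| ≤ K(1 + R⁴)/(R(1 - R²)²). -/
/-!
By the Cauchy integral formula on the circle `|z| = R`,
`|h'(0)| ≤ (2πR)⁻¹ ∫₀^{2π} |h(Re^{iθ})| dθ`. On that circle the hypothesis bounds `|h|` by
`K |1 - R²e^{2iθ}|² / (1 - R²)²`, and `|1 - R²e^{2iθ}|² = 1 + R⁴ - 2R² cos 2θ` integrates to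
`2π(1 + R⁴)`.
-/

open Complex Metric

open Real in
theorem norm_circleIntegral_le_mul_integral_norm {E : Type*} [NormedAddCommGroup E]
    [NormedSpace ℂ E] (f : ℂ → E) (c : ℂ) {R : ℝ} (hR : 0 ≤ R) :
    ‖∮ z in C(c, R), f z‖ ≤ R * ∫ θ in 0..2 * π, ‖f (circleMap c R θ)‖ :=
  calc ‖∮ z in C(c, R), f z‖
      ≤ ∫ θ in 0..2 * π, ‖deriv (circleMap c R) θ • f (circleMap c R θ)‖ :=
        intervalIntegral.norm_integral_le_integral_norm two_pi_pos.le
    _ = R * ∫ θ in 0..2 * π, ‖f (circleMap c R θ)‖ := by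
        simp [norm_smul, abs_of_nonneg hR, intervalIntegral.integral_const_mul]

open Real in
theorem DiffContOnCl.norm_deriv_le_integral_norm {E : Type*} [NormedAddCommGroup E]
    [NormedSpace ℂ E] [CompleteSpace E] {f : ℂ → E} {c : ℂ} {R : ℝ} (hR : 0 < R)
    (hf : DiffContOnCl ℂ f (ball c R)) :
    ‖deriv f c‖ ≤ (2 * π * R)⁻¹ * ∫ θ in 0..2 * π, ‖f (circleMap c R θ)‖ := by
  have h2pi : ‖(2 * π * I : ℂ)‖ = 2 * π := by simp [abs_of_pos pi_pos]
  rw [mul_inv, mul_assoc, le_inv_mul_iff₀ two_pi_pos]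
  calc 2 * π * ‖deriv f c‖ = ‖∮ z in C(c, R), (1 / (z - c) ^ 2) • f z‖ := by
        rw [hf.deriv_eq_smul_circleIntegral hR, norm_smul, h2pi]
    _ ≤ R * ∫ θ in 0..2 * π, ‖(1 / (circleMap c R θ - c) ^ 2) • f (circleMap c R θ)‖ :=
        norm_circleIntegral_le_mul_integral_norm _ c hR.le
    _ = R⁻¹ * ∫ θ in 0..2 * π, ‖f (circleMap c R θ)‖ := by
        simp only [norm_smul, norm_div, norm_one, norm_pow, circleMap_sub_center,
          norm_circleMap_zero, abs_of_pos hR, intervalIntegral.integral_const_mul]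
        field_simp

theorem norm_one_sub_circleMap_sq_sq (R θ : ℝ) :
    ‖1 - circleMap 0 R θ ^ 2‖ ^ 2 = 1 + R ^ 4 - 2 * R ^ 2 * Real.cos (2 * θ) := by
  rw [Complex.sq_norm, Complex.normSq_apply]
  simp only [circleMap, zero_add, Complex.sub_re, Complex.sub_im, Complex.one_re, Complex.one_im,
    pow_two, Complex.mul_re, Complex.mul_im, Complex.ofReal_re, Complex.ofReal_im,
    Complex.exp_ofReal_mul_I_re, Complex.exp_ofReal_mul_I_im, Real.cos_two_mul]
  linear_combination (R ^ 4 * (Real.cos θ ^ 2 + Real.sin θ ^ 2 + 1) + 2 * R ^ 2) *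
    Real.sin_sq_add_cos_sq θ

open Real in
theorem integral_cos_two_mul_eq_zero : ∫ θ in 0..2 * π, Real.cos (2 * θ) = 0 := by
  rw [intervalIntegral.integral_comp_mul_left Real.cos two_ne_zero, integral_cos]
  simp [Real.sin_two_mul]

open Real in
theorem integral_norm_one_sub_circleMap_sq_sq (R : ℝ) :
    ∫ θ in 0..2 * π, ‖1 - circleMap 0 R θ ^ 2‖ ^ 2 = 2 * π * (1 + R ^ 4) := by
  simp only [norm_one_sub_circleMap_sq_sq]
  rw [intervalIntegral.integral_sub intervalIntegrable_const
      ((by fun_prop : Continuous fun θ => 2 * R ^ 2 * Real.cos (2 * θ)).intervalIntegrable _ _),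
    intervalIntegral.integral_const, intervalIntegral.integral_const_mul,
    integral_cos_two_mul_eq_zero]
  simp

theorem cauchy_deriv_bound_general (h : ℂ → ℂ) (R K : ℝ) (hR0 : 0 < R)
    (hdiff : DifferentiableOn ℂ h (closedBall (0 : ℂ) R))
    (hbound : ∀ z ∈ closedBall (0 : ℂ) R,
      ‖h z‖ ≤ K * ‖1 - z ^ 2‖ ^ 2 / (1 - ‖z‖ ^ 2) ^ 2) :
    ‖deriv h 0‖ ≤ K * (1 + R ^ 4) / (R * (1 - R ^ 2) ^ 2) := by
  have hmem : ∀ θ, circleMap 0 R θ ∈ closedBall (0 : ℂ) R := fun θ =>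
    sphere_subset_closedBall (circleMap_mem_sphere 0 hR0.le θ)
  have hcircle : ∀ θ, ‖h (circleMap 0 R θ)‖
      ≤ K / (1 - R ^ 2) ^ 2 * ‖1 - circleMap 0 R θ ^ 2‖ ^ 2 := fun θ => by
    have := hbound _ (hmem θ)
    rwa [norm_circleMap_zero, abs_of_pos hR0, mul_div_right_comm] at this
  have hintegral : ∫ θ in 0..2 * Real.pi, ‖h (circleMap 0 R θ)‖
      ≤ K / (1 - R ^ 2) ^ 2 * (2 * Real.pi * (1 + R ^ 4)) := by
    rw [← integral_norm_one_sub_circleMap_sq_sq R, ← intervalIntegral.integral_const_mul]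
    refine intervalIntegral.integral_mono_on Real.two_pi_pos.le ?_ ?_ fun θ _ => hcircle θ
    · exact (hdiff.continuousOn.comp_continuous (continuous_circleMap 0 R) hmem).norm
        |>.intervalIntegrable _ _
    · exact (continuous_const.mul ((continuous_const.sub
        ((continuous_circleMap 0 R).pow 2)).norm.pow 2)).intervalIntegrable _ _
  calc ‖deriv h 0‖
      ≤ (2 * Real.pi * R)⁻¹ * ∫ θ in 0..2 * Real.pi, ‖h (circleMap 0 R θ)‖ :=
        (hdiff.mono closure_ball_subset_closedBall).diffContOnCl.norm_deriv_le_integral_norm hR0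
    _ ≤ (2 * Real.pi * R)⁻¹ * (K / (1 - R ^ 2) ^ 2 * (2 * Real.pi * (1 + R ^ 4))) := by
        gcongr
    _ = K * (1 + R ^ 4) / (R * (1 - R ^ 2) ^ 2) := by
        field_simp

theorem cauchy_deriv_bound (h : ℂ → ℂ) (R K : ℝ) (hR0 : 0 < R) (hR1 : R < 1)
    (hK : 0 ≤ K) (hdiff : DifferentiableOn ℂ h (closedBall (0 : ℂ) R))
    (hbound : ∀ z ∈ closedBall (0 : ℂ) R,
      ‖h z‖ ≤ K * ‖1 - z ^ 2‖ ^ 2 / (1 - ‖z‖ ^ 2) ^ 2) :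
    ‖deriv h 0‖ ≤ K * (1 + R ^ 4) / (R * (1 - R ^ 2) ^ 2) :=
  cauchy_deriv_bound_general h R K hR0 hdiff hbound
end

section
/- If h is holomorphic on the disk {|z| ≤ R} with R = tanh(r/2), 0 < r ≤ 1/2, and |h(z)| ≤ K·|1-z²|²/(1-|z|²)² on this disk, then |h'(0)| ≤ 5K/(2r). -/
open Complex Metric

open scoped Topology

/-!
Dividing by the weight `(1 - z²)²`, which equals `1` and has vanishing derivative at `0`, turns
the hypothesis into the bound `K / (1 - R²)²` on the circle `|z| = R` without changing `h'(0)`,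
so Cauchy's estimate gives `|h'(0)| ≤ K / (R (1 - R²)²)`. The elementary bounds
`x (1 - x²/2) ≤ tanh x ≤ x` then show `R (1 - R²)² ≥ 2r/5` for `R = tanh (r/2)`.
-/

namespace Real

lemma sinh_le_mul_cosh {x : ℝ} (hx : 0 ≤ x) : sinh x ≤ x * cosh x := by
  refine hasSum_le (fun n ↦ ?_) (hasSum_sinh x) ((hasSum_cosh x).mul_left x)
  rw [pow_succ', mul_div_assoc]
  gcongr
  omega

lemma tanh_nonneg {x : ℝ} (hx : 0 ≤ x) : 0 ≤ tanh x := by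
  rw [tanh_eq_sinh_div_cosh]
  exact div_nonneg (sinh_nonneg_iff.2 hx) (cosh_pos x).le

lemma tanh_le_self {x : ℝ} (hx : 0 ≤ x) : tanh x ≤ x := by
  rw [tanh_eq_sinh_div_cosh, div_le_iff₀ (cosh_pos x)]
  exact sinh_le_mul_cosh hx

lemma mul_one_sub_sq_div_two_le_tanh {x : ℝ} (hx : 0 ≤ x) : x * (1 - x ^ 2 / 2) ≤ tanh x := by
  rcases le_total (1 - x ^ 2 / 2) 0 with hneg | hpos
  · exact (mul_nonpos_of_nonneg_of_nonpos hx hneg).trans (tanh_nonneg hx)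
  have hcosh : cosh x * (1 - x ^ 2 / 2) ≤ 1 :=
    calc cosh x * (1 - x ^ 2 / 2) ≤ exp (x ^ 2 / 2) * exp (-(x ^ 2 / 2)) := by
          gcongr
          · exact cosh_le_exp_half_sq x
          · linarith [add_one_le_exp (-(x ^ 2 / 2))]
      _ = 1 := by rw [← exp_add, add_neg_cancel, exp_zero]
  calc x * (1 - x ^ 2 / 2) ≤ sinh x * (1 - x ^ 2 / 2) := by
        gcongr; exact self_le_sinh_iff.2 hx
    _ = tanh x * (cosh x * (1 - x ^ 2 / 2)) := by
        rw [tanh_eq_sinh_div_cosh]; field_simp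
    _ ≤ tanh x := mul_le_of_le_one_right (tanh_nonneg hx) hcosh

lemma four_fifths_mul_le_tanh_mul_one_sub_tanh_sq_sq {x : ℝ} (hx0 : 0 < x) (hx1 : x ≤ 1 / 4) :
    4 / 5 * x ≤ tanh x * (1 - tanh x ^ 2) ^ 2 := by
  have hlow := mul_one_sub_sq_div_two_le_tanh hx0.le
  have hup := tanh_le_self hx0.le
  have htanh : 31 / 32 * x ≤ tanh x := by nlinarith
  have htanh_sq : tanh x ^ 2 ≤ 1 / 16 := by nlinarith
  have hsq : 225 / 256 ≤ (1 - tanh x ^ 2) ^ 2 := by nlinarith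
  nlinarith

end Real

theorem Complex.norm_deriv_le_of_norm_le_mul_norm {c : ℂ} {R M : ℝ} {h q : ℂ → ℂ} (hR : 0 < R)
    (hh : DifferentiableOn ℂ h (closedBall c R)) (hq : DifferentiableOn ℂ q (closedBall c R))
    (hq0 : ∀ z ∈ closedBall c R, q z ≠ 0) (hq' : deriv q c = 0)
    (hbound : ∀ z ∈ sphere c R, ‖h z‖ ≤ M * ‖q z‖) :
    ‖deriv h c‖ ≤ M * ‖q c‖ / R := by
  set g : ℂ → ℂ := fun z ↦ h z / q z
  have hg : DifferentiableOn ℂ g (closedBall c R) := hh.div hq hq0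
  have hgR : ‖deriv g c‖ ≤ M / R := by
    refine norm_deriv_le_of_forall_mem_sphere_norm_le hR ?_ fun z hz ↦ ?_
    · rw [← closure_ball c hR.ne'] at hg
      exact hg.diffContOnCl
    · rw [norm_div, div_le_iff₀ (norm_pos_iff.2 (hq0 z (sphere_subset_closedBall hz)))]
      exact hbound z hz
  have hnhds : closedBall c R ∈ 𝓝 c := closedBall_mem_nhds c hR
  have hhg : h =ᶠ[𝓝 c] fun z ↦ g z * q z :=
    Filter.mem_of_superset hnhds fun z hz ↦ (div_mul_cancel₀ (h z) (hq0 z hz)).symm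
  have hderiv : deriv h c = deriv g c * q c := by
    rw [hhg.deriv_eq, deriv_fun_mul (hg.differentiableAt hnhds) (hq.differentiableAt hnhds), hq',
      mul_zero, add_zero]
  calc ‖deriv h c‖ = ‖deriv g c‖ * ‖q c‖ := by rw [hderiv, norm_mul]
    _ ≤ M / R * ‖q c‖ := by gcongr
    _ = M * ‖q c‖ / R := by ring

theorem cauchy_deriv_bound_tanh (h : ℂ → ℂ) (r K : ℝ) (hr0 : 0 < r) (hr1 : r ≤ 1 / 2)
    (hK : 0 ≤ K)
    (hdiff : DifferentiableOn ℂ h (closedBall (0 : ℂ) (Real.tanh (r / 2))))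
    (hbound : ∀ z ∈ closedBall (0 : ℂ) (Real.tanh (r / 2)),
      ‖h z‖ ≤ K * ‖1 - z ^ 2‖ ^ 2 / (1 - ‖z‖ ^ 2) ^ 2) :
    ‖deriv h 0‖ ≤ 5 * K / (2 * r) := by
  have hR := Real.four_fifths_mul_le_tanh_mul_one_sub_tanh_sq_sq (x := r / 2) (by positivity)
    (by linarith)
  set R := Real.tanh (r / 2)
  have hR0 : 0 < R := by nlinarith [sq_nonneg (1 - R ^ 2)]
  have hR1 : R < 1 := Real.tanh_lt_one _
  have hq0 : ∀ z ∈ closedBall (0 : ℂ) R, (1 - z ^ 2) ^ 2 ≠ 0 := by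
    intro z hz
    refine pow_ne_zero 2 (sub_ne_zero.2 fun h1 ↦ ?_)
    have : ‖z‖ ^ 2 = 1 := by rw [← norm_pow, ← h1, norm_one]
    nlinarith [norm_nonneg z, mem_closedBall_zero_iff.1 hz]
  have hcauchy := Complex.norm_deriv_le_of_norm_le_mul_norm (M := K / (1 - R ^ 2) ^ 2) hR0 hdiff
    (by fun_prop) hq0 (by simp) fun z hz ↦ by
      have hz' : ‖z‖ = R := mem_sphere_zero_iff_norm.1 hz
      simpa [hz', div_mul_eq_mul_div] using hbound z (sphere_subset_closedBall hz)
  calc ‖deriv h 0‖ ≤ K / ((1 - R ^ 2) ^ 2 * R) := by simpa [div_div] using hcauchy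
    _ ≤ K / (2 / 5 * r) := div_le_div_of_nonneg_left hK (by positivity) (by linarith)
    _ = 5 * K / (2 * r) := by field_simp
end

section
/- Let z₊, z₋ ∈ ℂ satisfy |z₋| ≤ κ and |z₊| ≥ 1/κ for some 0 < κ < 1/2, and let m(z) = i·((i−z₊)/(i−z₋))·((z−z₋)/(z−z₊)). Then m(z₋)=0, m(z₊)=∞, m(i)=i, and |m'(i) − 1| ≤ 2κ/(1−κ) and |1/m'(i) − 1| ≤ 2κ/(1−κ). -/
/-!
With `a = z₋` and `b = 1/z₊`, both of norm at most `κ`, partial fractions give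
`m'(i) = i/(i - a) + i b/(1 - i b)`, so `m'(i) - 1 = a/(i - a) + i b/(1 - i b)` is a sum of two
terms of norm at most `κ/(1 - κ)`, while `1/m'(i) - 1 = (b - a + 2iab)/(i(1 - ab))` has norm at most
`2κ(1 + κ)/(1 - κ²) = 2κ/(1 - κ)`.
-/

open Complex Filter Topology

section NormedField

variable {𝕜 : Type*} [NormedField 𝕜]

theorem one_sub_le_norm_sub {c x : 𝕜} {κ : ℝ} (hc : ‖c‖ = 1) (hx : ‖x‖ ≤ κ) :
    1 - κ ≤ ‖c - x‖ := by
  have := norm_sub_norm_le c x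
  linarith

theorem sub_ne_zero_of_norm_le {c x : 𝕜} {κ : ℝ} (hc : ‖c‖ = 1) (hx : ‖x‖ ≤ κ) (hκ : κ < 1) :
    c - x ≠ 0 :=
  norm_pos_iff.mp ((sub_pos.mpr hκ).trans_le (one_sub_le_norm_sub hc hx))

theorem norm_div_sub_le {c x : 𝕜} {κ : ℝ} (hc : ‖c‖ = 1) (hx : ‖x‖ ≤ κ) (hκ : κ < 1) :
    ‖x / (c - x)‖ ≤ κ / (1 - κ) := by
  rw [norm_div]
  exact div_le_div₀ ((norm_nonneg x).trans hx) hx (sub_pos.mpr hκ) (one_sub_le_norm_sub hc hx)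

theorem tendsto_norm_mul_div_sub_nhdsNE {c p q : 𝕜} (hc : c ≠ 0) (hpq : p ≠ q) :
    Tendsto (fun z => ‖c * ((z - q) / (z - p))‖) (𝓝[≠] p) atTop := by
  simp only [div_eq_mul_inv, ← mul_assoc, norm_mul, norm_inv]
  refine Tendsto.pos_mul_atTop
    (mul_pos (norm_pos_iff.mpr hc) (norm_pos_iff.mpr (sub_ne_zero.mpr hpq))) ?_
    (tendsto_norm_sub_self_nhdsNE p).inv_tendsto_nhdsGT_zero
  exact ((continuous_const.mul (continuous_id.sub continuous_const).norm).tendsto p).mono_left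
    nhdsWithin_le_nhds

end NormedField

theorem hasDerivAt_mul_div_sub {𝕜 : Type*} [NontriviallyNormedField 𝕜] (c p q : 𝕜) {z : 𝕜}
    (hz : z - p ≠ 0) :
    HasDerivAt (fun w => c * ((w - q) / (w - p))) (c * ((q - p) / (z - p) ^ 2)) z := by
  refine ((((hasDerivAt_id' z).sub_const q).div ((hasDerivAt_id' z).sub_const p) hz).const_mul
    c).congr_deriv ?_
  ring

section DerivativeAtI

variable {a b : ℂ} {κ : ℝ}

theorem hasDerivAt_mobius_normalization_I {p : ℂ} (ha : I - a ≠ 0) (hp : I - p ≠ 0)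
    (hp0 : p ≠ 0) :
    HasDerivAt (fun z => I * ((I - p) / (I - a)) * ((z - a) / (z - p)))
      (I / (I - a) + I * p⁻¹ / (1 - I * p⁻¹)) I := by
  refine (hasDerivAt_mul_div_sub _ p a hp).congr_deriv ?_
  have hpI : p - I ≠ 0 := by rwa [← neg_sub, neg_ne_zero]
  field_simp
  ring

theorem norm_I_div_sub_add_I_mul_div_sub_one_le (ha : ‖a‖ ≤ κ) (hb : ‖b‖ ≤ κ) (hκ : κ < 1) :
    ‖I / (I - a) + I * b / (1 - I * b) - 1‖ ≤ 2 * κ / (1 - κ) := by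
  have hIb : ‖I * b‖ ≤ κ := by rwa [norm_mul, norm_I, one_mul]
  have hIa := sub_ne_zero_of_norm_le norm_I ha hκ
  calc ‖I / (I - a) + I * b / (1 - I * b) - 1‖
      = ‖a / (I - a) + I * b / (1 - I * b)‖ := by
        congr 1
        field_simp
        ring
    _ ≤ ‖a / (I - a)‖ + ‖I * b / (1 - I * b)‖ := norm_add_le _ _
    _ ≤ κ / (1 - κ) + κ / (1 - κ) :=
        add_le_add (norm_div_sub_le norm_I ha hκ) (norm_div_sub_le norm_one hIb hκ)
    _ = 2 * κ / (1 - κ) := by ring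

theorem norm_inv_I_div_sub_add_I_mul_div_sub_sub_one_le (ha : ‖a‖ ≤ κ) (hb : ‖b‖ ≤ κ)
    (hκ : κ < 1) :
    ‖(I / (I - a) + I * b / (1 - I * b))⁻¹ - 1‖ ≤ 2 * κ / (1 - κ) := by
  have hκ0 : 0 ≤ κ := (norm_nonneg a).trans ha
  have hIb : ‖I * b‖ ≤ κ := by rwa [norm_mul, norm_I, one_mul]
  have hab : ‖a * b‖ ≤ κ * κ := by rw [norm_mul]; exact mul_le_mul ha hb (norm_nonneg b) hκ0
  have hκκ : κ * κ < 1 := by nlinarith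
  have hIa := sub_ne_zero_of_norm_le norm_I ha hκ
  have hIb' := sub_ne_zero_of_norm_le norm_one hIb hκ
  have hab' := sub_ne_zero_of_norm_le norm_one hab hκκ
  have hnum : ‖b - a + 2 * I * (a * b)‖ ≤ 2 * κ * (1 + κ) := by
    calc ‖b - a + 2 * I * (a * b)‖ ≤ ‖b‖ + ‖a‖ + 2 * ‖a * b‖ := by
          refine (norm_add_le _ _).trans (add_le_add (norm_sub_le _ _) ?_)
          simp
      _ ≤ κ + κ + 2 * (κ * κ) := by gcongr
      _ = 2 * κ * (1 + κ) := by ring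
  have hden : 1 - κ * κ ≤ ‖I * (1 - a * b)‖ := by
    rw [norm_mul, norm_I, one_mul]
    exact one_sub_le_norm_sub norm_one hab
  have hsum : I / (I - a) + I * b / (1 - I * b) = I * (1 - a * b) / ((I - a) * (1 - I * b)) := by
    field_simp
    ring
  calc ‖(I / (I - a) + I * b / (1 - I * b))⁻¹ - 1‖
      = ‖(b - a + 2 * I * (a * b)) / (I * (1 - a * b))‖ := by
        rw [hsum, inv_div]
        congr 1
        field_simp
        linear_combination (-b) * I_sq
    _ ≤ 2 * κ * (1 + κ) / (1 - κ * κ) := by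
        rw [norm_div]
        exact div_le_div₀ (by positivity) hnum (sub_pos.mpr hκκ) hden
    _ = 2 * κ / (1 - κ) := by
        rw [div_eq_div_iff (sub_pos.mpr hκκ).ne' (by linarith)]
        ring

end DerivativeAtI

theorem mobius_normalization_derivative_bound
    (κ : ℝ) (hκ0 : 0 < κ) (hκ1 : κ < 1 / 2) (zp zm : ℂ)
    (hzm : ‖zm‖ ≤ κ) (hzp : 1 / κ ≤ ‖zp‖)
    (m : ℂ → ℂ)
    (hm : ∀ z : ℂ, m z = Complex.I * ((Complex.I - zp) / (Complex.I - zm)) *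
      ((z - zm) / (z - zp))) :
    m zm = 0 ∧ m Complex.I = Complex.I ∧
      Filter.Tendsto (fun z => ‖m z‖) (nhdsWithin zp {zp}ᶜ) Filter.atTop ∧
      ‖deriv m Complex.I - 1‖ ≤ 2 * κ / (1 - κ) ∧
      ‖(deriv m Complex.I)⁻¹ - 1‖ ≤ 2 * κ / (1 - κ) := by
  have hκ : κ < 1 := by linarith
  have hzp_inv : ‖zp⁻¹‖ ≤ κ := by
    rw [norm_inv]
    exact inv_le_of_inv_le₀ hκ0 (by rwa [← one_div])
  have hzm1 : ‖zm‖ < 1 := hzm.trans_lt hκ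
  have hzp1 : 1 < ‖zp‖ := (one_lt_one_div hκ0 hκ).trans_le hzp
  have hIzm : I - zm ≠ 0 := sub_ne_zero_of_norm_le norm_I hzm hκ
  have hIzp : I - zp ≠ 0 := sub_ne_zero.mpr (ne_of_apply_ne norm (by rw [norm_I]; exact hzp1.ne))
  have hzmzp : zm ≠ zp := ne_of_apply_ne norm (hzm1.trans hzp1).ne
  have hzp0 : zp ≠ 0 := norm_pos_iff.mp (one_pos.trans hzp1)
  have hderiv : deriv m I = I / (I - zm) + I * zp⁻¹ / (1 - I * zp⁻¹) := by
    rw [funext hm]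
    exact (hasDerivAt_mobius_normalization_I hIzm hIzp hzp0).deriv
  refine ⟨by simp [hm], by rw [hm]; field_simp, ?_, ?_, ?_⟩
  · rw [funext hm]
    exact tendsto_norm_mul_div_sub_nhdsNE (by simp [hIzm, hIzp]) hzmzp.symm
  · rw [hderiv]
    exact norm_I_div_sub_add_I_mul_div_sub_one_le hzm hzp_inv hκ
  · rw [hderiv]
    exact norm_inv_I_div_sub_add_I_mul_div_sub_sub_one_le hzm hzp_inv hκ
end
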